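/- arXiv:math/0507100 — 2 statements merged into one kernel-verified Lean document; each statement's English description precedes it below -/
import Mathlib

section
/- Let 0 < R < 1, D = {ζ ∈ ℂ : R < |ζ| < 1}, and n ∈ ℤ with n ≠ 1. The function u(z) = Re[ c (z^{n−1} − z^{1−n}) + z^{n−1} ], where c = (R^{n+1} − R^{n−1})/(R^{n−1} − R^{1−n}), is harmonic on ℂ∖{0} and satisfies u(e^{iθ}) = cos((n−1)θ) and u(Re^{iθ}) = R^{n+1} cos((n−1)θ) for all θ. -/
open Complex Set

/-- `u` is harmonic on `s`: locally the real part of a holomorphic function. -/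
def HarmonicOnD (u : ℂ → ℝ) (s : Set ℂ) : Prop :=
  ∀ z ∈ s, ∃ ε > 0, ∃ F : ℂ → ℂ, DifferentiableOn ℂ F (Metric.ball z ε) ∧
    ∀ w ∈ Metric.ball z ε, u w = (F w).re

theorem stmt_8 (R : ℝ) (hR0 : 0 < R) (hR1 : R < 1) (n : ℤ) (hn : n ≠ 1)
    (c : ℂ) (hc : c = (((R : ℂ) ^ (n + 1) - (R : ℂ) ^ (n - 1)) /
      ((R : ℂ) ^ (n - 1) - (R : ℂ) ^ (1 - n))))
    (u : ℂ → ℝ) (hu : ∀ z, u z = (c * (z ^ (n - 1) - z ^ (1 - n)) + z ^ (n - 1)).re) :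
    HarmonicOnD u {(0 : ℂ)}ᶜ ∧
      (∀ θ : ℝ, u (Complex.exp (θ * Complex.I)) = Real.cos ((n - 1) * θ)) ∧
      (∀ θ : ℝ, u (R * Complex.exp (θ * Complex.I)) =
        R ^ (n + 1) * Real.cos ((n - 1) * θ)) := by
  -- the real value of c
  set a : ℝ := (R ^ (n + 1) - R ^ (n - 1)) / (R ^ (n - 1) - R ^ (1 - n)) with ha
  have hden : R ^ (n - 1) - R ^ (1 - n) ≠ 0 := by
    have : (n - 1 : ℤ) ≠ (1 - n) := by omega
    have := zpow_right_injective₀ hR0 (ne_of_lt hR1)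
    intro h
    exact this.ne ‹(n - 1 : ℤ) ≠ (1 - n)› (by linarith)
  have hca : c = (a : ℂ) := by
    rw [hc, ha]; push_cast [Complex.ofReal_zpow]; ring
  have hx : ∀ (θ : ℝ) (k : ℤ), (Complex.exp (θ * Complex.I)) ^ k
      = Complex.exp ((((k : ℝ) * θ : ℝ) : ℂ) * Complex.I) := by
    intro θ k
    rw [← Complex.exp_int_mul]; push_cast; ring_nf
  refine ⟨?_, ?_, ?_⟩
  · intro z hz
    have hz0 : z ≠ 0 := hz
    refine ⟨‖z‖, by simpa using hz0, fun w => c * (w ^ (n - 1) - w ^ (1 - n)) + w ^ (n - 1),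
      ?_, fun w _ => hu w⟩
    intro w hw
    have hw0 : w ≠ 0 := by
      intro h
      simp [h, Metric.mem_ball, dist_eq_norm] at hw
    exact (((((differentiableAt_zpow.2 (Or.inl hw0)).sub
      (differentiableAt_zpow.2 (Or.inl hw0))).const_mul c).add
      (differentiableAt_zpow.2 (Or.inl hw0))).differentiableWithinAt)
  · intro θ
    rw [hu, hca, hx, hx]
    simp only [Complex.add_re, Complex.re_ofReal_mul, Complex.sub_re,
      Complex.exp_ofReal_mul_I_re]
    push_cast
    rw [show (1 - (n : ℝ)) * θ = -(((n : ℝ) - 1) * θ) by ring, Real.cos_neg]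
    ring
  · intro θ
    rw [hu, hca]
    rw [mul_zpow, mul_zpow, hx, hx]
    have hRC : ∀ k : ℤ, ((R : ℂ)) ^ k = ((R ^ k : ℝ) : ℂ) := fun k =>
      (Complex.ofReal_zpow R k).symm
    rw [hRC, hRC]
    simp only [Complex.add_re, Complex.re_ofReal_mul, Complex.sub_re,
      Complex.exp_ofReal_mul_I_re]
    push_cast
    rw [show (1 - (n : ℝ)) * θ = -(((n : ℝ) - 1) * θ) by ring, Real.cos_neg]
    have key : a * (R ^ (n - 1) - R ^ (1 - n)) = R ^ (n + 1) - R ^ (n - 1) :=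
      div_mul_cancel₀ _ hden
    linear_combination Real.cos (((n : ℝ) - 1) * θ) * key
end

section
/- Let 0 < R < 1 and D = {ζ : R < |ζ| < 1}, and let Φ(ζ) = conj(ζ) on bD. For every integer n ≠ 1, the harmonic extension of ζ ↦ Re(ζ^n Φ(ζ)) to D is the real part of a single-valued holomorphic function on D, namely z ↦ c (z^{n−1} − z^{1−n}) + z^{n−1} with c = (R^{n+1} − R^{n−1})/(R^{n−1} − R^{1−n}); yet Φ does not extend holomorphically through D. -/
/-!
On a boundary circle `‖ζ‖ = ρ` we have `Re (ζ ^ n * conj ζ) = ρ² Re ζ^(n-1)` and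
`Re ζ^(1-n) = ρ^(-2(n-1)) Re ζ^(n-1)`, so for real `c` the real part of
`c (ζ^(n-1) - ζ^(1-n)) + ζ^(n-1)` is `(c (1 - ρ^(-2(n-1))) + 1) Re ζ^(n-1)`; the value of `c` is
exactly the one making this multiplier `ρ²` for `ρ = R` (for `ρ = 1` it is `1` whatever `c`).

On the other hand `conj ζ = ρ² / ζ` on `‖ζ‖ = ρ`, so a holomorphic extension of `conj` would have
integral `2πi ρ²` over the circle of radius `ρ`, whereas Cauchy's theorem for the annulus makes the
integrals over the two boundary circles equal.
-/

open Complex Set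

/-- `Φ` (defined on `bD = frontier D`) extends holomorphically through `D`. -/
def ExtendsHolo (D : Set ℂ) (Φ : ℂ → ℂ) : Prop :=
  ∃ F : ℂ → ℂ, ContinuousOn F (closure D) ∧ DifferentiableOn ℂ F D ∧
    Set.EqOn F Φ (frontier D)

open Metric
open scoped ComplexConjugate Real

section Annulus

variable {E : Type*} [SeminormedAddCommGroup E] [NormedSpace ℝ E] {a b : ℝ}

theorem closure_norm_preimage_Ioo (ha : 0 < a) (hab : a < b) :
    closure (norm ⁻¹' Ioo a b : Set E) = norm ⁻¹' Icc a b := by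
  refine (closure_minimal (preimage_mono Ioo_subset_Icc_self)
    (isClosed_Icc.preimage continuous_norm)).antisymm fun x hx => ?_
  have hx0 : 0 < ‖x‖ := ha.trans_le hx.1
  have hmem : (1 : ℝ) ∈ closure (Ioo (a / ‖x‖) (b / ‖x‖)) := by
    rw [closure_Ioo (div_lt_div_of_pos_right hab hx0).ne]
    exact ⟨div_le_one_of_le₀ hx.1 hx0.le, (one_le_div hx0).2 hx.2⟩
  have hmaps : MapsTo (fun t : ℝ => t • x) (Ioo (a / ‖x‖) (b / ‖x‖)) (norm ⁻¹' Ioo a b) := by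
    rintro t ⟨hat, htb⟩
    have ht : 0 < t := (div_pos ha hx0).trans hat
    simp only [mem_preimage, mem_Ioo, norm_smul_of_nonneg ht.le]
    exact ⟨(div_lt_iff₀ hx0).1 hat, (lt_div_iff₀ hx0).1 htb⟩
  simpa using hmaps.closure (continuous_id.smul continuous_const) hmem

theorem frontier_norm_preimage_Ioo (ha : 0 < a) (hab : a < b) :
    frontier (norm ⁻¹' Ioo a b : Set E) = norm ⁻¹' {a, b} := by
  rw [frontier, closure_norm_preimage_Ioo ha hab,
    (isOpen_Ioo.preimage continuous_norm).interior_eq, ← preimage_sdiff,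
    Icc_sdiff_Ioo_same hab.le]

end Annulus

noncomputable def annulusCoeff (R : ℝ) (n : ℤ) : ℝ :=
  (R ^ (n + 1) - R ^ (n - 1)) / (R ^ (n - 1) - R ^ (1 - n))

theorem annulusCoeff_mul_add_one {R : ℝ} (hR0 : 0 < R) (hR1 : R ≠ 1) {n : ℤ} (hn : n ≠ 1) :
    annulusCoeff R n * (1 - ((R ^ (n - 1)) ^ 2)⁻¹) + 1 = R ^ 2 := by
  set t := R ^ (n - 1) with ht
  have ht0 : 0 < t := zpow_pos hR0 _
  have ht1 : t ≠ 1 := fun h => hn <| by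
    simpa [sub_eq_zero] using zpow_right_injective₀ hR0 hR1 (h.trans (zpow_zero R).symm)
  have hsq : t ^ 2 - 1 ≠ 0 := by
    rw [sub_ne_zero, Ne, pow_eq_one_iff_of_nonneg ht0.le two_ne_zero]
    exact ht1
  have hnum : R ^ (n + 1) = t * R ^ 2 := by
    rw [ht, ← zpow_natCast, ← zpow_add₀ hR0.ne']
    ring_nf
  have hden : R ^ (1 - n) = t⁻¹ := by
    rw [ht, ← zpow_neg]
    ring_nf
  rw [annulusCoeff, hnum, hden, ← ht]
  field_simp
  ring

namespace Complex

theorem ofReal_annulusCoeff (R : ℝ) (n : ℤ) :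
    (annulusCoeff R n : ℂ) =
      ((R : ℂ) ^ (n + 1) - (R : ℂ) ^ (n - 1)) / ((R : ℂ) ^ (n - 1) - (R : ℂ) ^ (1 - n)) := by
  simp [annulusCoeff]

theorem re_zpow_neg (ζ : ℂ) (m : ℤ) : (ζ ^ (-m)).re = (ζ ^ m).re / (‖ζ‖ ^ m) ^ 2 := by
  rw [zpow_neg, inv_re, normSq_eq_norm_sq, norm_zpow]

theorem re_ofReal_mul_zpow_sub_zpow_neg_add (c : ℝ) (m : ℤ) (ζ : ℂ) :
    ((c : ℂ) * (ζ ^ m - ζ ^ (-m)) + ζ ^ m).re =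
      (c * (1 - ((‖ζ‖ ^ m) ^ 2)⁻¹) + 1) * (ζ ^ m).re := by
  rw [add_re, re_ofReal_mul, sub_re, re_zpow_neg]
  ring

theorem re_zpow_mul_conj (ζ : ℂ) (n : ℤ) :
    (ζ ^ n * conj ζ).re = ‖ζ‖ ^ 2 * (ζ ^ (n - 1)).re := by
  rcases eq_or_ne ζ 0 with rfl | hζ
  · simp
  rw [← re_ofReal_mul, ofReal_pow, ← mul_conj', zpow_sub_one₀ hζ]
  field_simp

theorem circleIntegral_conj {r : ℝ} (hr : 0 < r) :
    (∮ z in C(0, r), conj z) = r ^ 2 * (2 * π * I) := by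
  have hconj : EqOn (fun z => conj z) (fun z => (r : ℂ) ^ 2 * (z - 0)⁻¹) (sphere 0 r) := by
    intro z hz
    have hz : ‖z‖ = r := by simpa using hz
    have hz0 : z ≠ 0 := norm_pos_iff.1 (hz ▸ hr)
    simp only [sub_zero, ← hz, ← mul_conj']
    field_simp
  rw [circleIntegral.integral_congr hr.le hconj, circleIntegral.integral_const_mul,
    circleIntegral.integral_sub_inv_of_mem_ball (mem_ball_self hr)]

theorem not_extendsHolo_conj {r R : ℝ} (hr : 0 < r) (hrR : r < R) :
    ¬ ExtendsHolo (norm ⁻¹' Ioo r R) conj := by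
  rintro ⟨F, hFc, hFd, hFeq⟩
  have hsphere (ρ : ℝ) (hρ : ρ = r ∨ ρ = R) :
      (∮ z in C(0, ρ), F z) = ρ ^ 2 * (2 * π * I) := by
    have hρ0 : 0 < ρ := by rcases hρ with rfl | rfl <;> linarith
    rw [← circleIntegral_conj hρ0]
    refine circleIntegral.integral_congr hρ0.le fun z hz => hFeq ?_
    rw [frontier_norm_preimage_Ioo hr hrR]
    have hz : ‖z‖ = ρ := by simpa using hz
    simpa [hz] using hρ
  have hCauchy : (∮ z in C(0, R), F z) = ∮ z in C(0, r), F z := by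
    refine circleIntegral_eq_of_differentiable_on_annulus_off_countable hr hrR.le
      countable_empty ?_ fun z hz => ?_
    · convert hFc using 1
      rw [closure_norm_preimage_Ioo hr hrR]
      ext z
      simp [and_comm]
    · apply hFd.differentiableAt ((isOpen_Ioo.preimage continuous_norm).mem_nhds _)
      simpa [and_comm] using hz
  rw [hsphere R (.inr rfl), hsphere r (.inl rfl)] at hCauchy
  have hsq : R ^ 2 = r ^ 2 := by
    exact_mod_cast mul_right_cancel₀ (by simp [Real.pi_ne_zero]) hCauchy
  nlinarith

end Complex

theorem stmt_9 (R : ℝ) (hR0 : 0 < R) (hR1 : R < 1)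
    (D : Set ℂ) (hD : D = {ζ : ℂ | R < ‖ζ‖ ∧ ‖ζ‖ < 1}) :
    (∀ n : ℤ, n ≠ 1 →
      ∀ c : ℂ, c = (((R : ℂ) ^ (n + 1) - (R : ℂ) ^ (n - 1)) /
          ((R : ℂ) ^ (n - 1) - (R : ℂ) ^ (1 - n))) →
        -- the harmonic extension of `ζ ↦ Re (ζ^n conj ζ)` is the real part of
        -- the single-valued holomorphic function
        -- `F : z ↦ c (z^{n-1} - z^{1-n}) + z^{n-1}` on `D`:
        ContinuousOn (fun z : ℂ => c * (z ^ (n - 1) - z ^ (1 - n)) + z ^ (n - 1))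
          (closure D) ∧
        DifferentiableOn ℂ
          (fun z : ℂ => c * (z ^ (n - 1) - z ^ (1 - n)) + z ^ (n - 1)) D ∧
        (∀ ζ ∈ frontier D,
          (c * (ζ ^ (n - 1) - ζ ^ (1 - n)) + ζ ^ (n - 1)).re =
            (ζ ^ n * (starRingEnd ℂ) ζ).re)) ∧
    -- yet `Φ : ζ ↦ conj ζ` does not extend holomorphically through `D`:
    ¬ ExtendsHolo D (fun ζ => (starRingEnd ℂ) ζ) := by
  replace hD : D = norm ⁻¹' Ioo R 1 := hD
  subst hD
  refine ⟨fun n hn c hc => ?_, not_extendsHolo_conj hR0 hR1⟩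
  have hF : DifferentiableOn ℂ (fun z : ℂ => c * (z ^ (n - 1) - z ^ (1 - n)) + z ^ (n - 1))
      {0}ᶜ := by
    fun_prop (disch := simp_all)
  have hclosure : closure (norm ⁻¹' Ioo R 1) ⊆ ({0}ᶜ : Set ℂ) := by
    rw [closure_norm_preimage_Ioo hR0 hR1]
    rintro z ⟨hz, -⟩ rfl
    linarith [norm_zero (E := ℂ)]
  refine ⟨hF.continuousOn.mono hclosure, hF.mono (subset_closure.trans hclosure),
    fun ζ hζ => ?_⟩
  rw [hc, ← ofReal_annulusCoeff, show 1 - n = -(n - 1) by ring,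
    re_ofReal_mul_zpow_sub_zpow_neg_add, re_zpow_mul_conj]
  rw [frontier_norm_preimage_Ioo hR0 hR1] at hζ
  obtain h | h : ‖ζ‖ = R ∨ ‖ζ‖ = 1 := hζ
  · rw [h, annulusCoeff_mul_add_one hR0 hR1.ne hn]
  · simp [h]
end
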